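/- Let ξ = [0; a₁, a₂, …] and ζ = [0; b₁, b₂, …] be continued fraction expansions of Laurent series in F_q((T⁻¹)) (with partial quotients aₙ, bₙ ∈ F_q[T] of positive degree for n ≥ 1). Assume there exists k ≥ 1 such that aₙ = bₙ for all 1 ≤ n ≤ k and a_{k+1} ≠ b_{k+1}. Then |ξ − ζ| = |a_{k+1} − b_{k+1}| / (|a_{k+1}| · |b_{k+1}| · |q_k|²), where q_k is the denominator of the k-th convergent of ξ. -/

import Mathlib

open Polynomial
open scoped Classical

noncomputable section

namespace CFq

variable (Fq : Type) [Field Fq] [Fintype Fq]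

/-- The element `T` of `F_q((T⁻¹))`, realized as `X⁻¹` in the Laurent series field. -/
def Tls : LaurentSeries Fq := HahnSeries.single (-1 : ℤ) (1 : Fq)

/-- The embedding of `F_q[T]` into `F_q((T⁻¹))`. -/
def toLS : Polynomial Fq →+* LaurentSeries Fq :=
  (Polynomial.aeval (Tls Fq)).toRingHom

/-- The absolute value `|ξ| = q^{-N}` where `ξ = Σ_{n ≥ N} a_n T^{-n}`, `a_N ≠ 0`. -/
def absQ (ξ : LaurentSeries Fq) : ℝ :=
  if ξ = 0 then 0 else (Fintype.card Fq : ℝ) ^ (-ξ.order)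

/-- Absolute value of a polynomial in `T`:  `|f| = q^{deg f}`. -/
def pabs (f : Polynomial Fq) : ℝ := absQ Fq (toLS Fq f)

/-- The height of a polynomial `P(X) ∈ (F_q[T])[X]`: the maximum of the absolute
values of its coefficients. -/
def Hpoly (P : Polynomial (Polynomial Fq)) : ℝ :=
  sSup {x : ℝ | ∃ i, x = pabs Fq (P.coeff i)}

/-- `ξ` has the (infinite) continued fraction expansion `[a₀; a₁, a₂, …]`, where all
partial quotients `aₙ`, `n ≥ 1`, have positive degree.  This is expressed via the
sequence of complete quotients (tails) `t n`, which satisfy `t n = a n + 1/(t (n+1))`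
and `|t n| > 1` for `n ≥ 1`. -/
def IsCF (ξ : LaurentSeries Fq) (a : ℕ → Polynomial Fq) : Prop :=
  (∀ n, 1 ≤ n → 1 ≤ (a n).natDegree) ∧
  ∃ t : ℕ → LaurentSeries Fq, t 0 = ξ ∧
    (∀ n, t n = toLS Fq (a n) + (t (n + 1))⁻¹) ∧
    (∀ n, 1 ≤ n → 1 < absQ Fq (t n))

/-- Denominators of the convergents: `q₀ = 1`, `q₁ = a₁`, `qₙ = aₙ q_{n-1} + q_{n-2}`. -/
def qden (a : ℕ → Polynomial Fq) : ℕ → Polynomial Fq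
  | 0 => 1
  | 1 => a 1
  | n + 2 => a (n + 2) * qden a (n + 1) + qden a n

/-- Evaluation of `P(X) ∈ (F_q[T])[X]` at a Laurent series. -/
def evalLS (P : Polynomial (Polynomial Fq)) (ξ : LaurentSeries Fq) : LaurentSeries Fq :=
  Polynomial.eval₂ (toLS Fq) ξ P

/-- The degree of an algebraic Laurent series over `F_q(T)`: the least degree of a
nonzero polynomial over `F_q[T]` annihilating it. -/
def degLS (ξ : LaurentSeries Fq) : ℕ :=
  sInf {d | ∃ P : Polynomial (Polynomial Fq), P ≠ 0 ∧ P.natDegree = d ∧ evalLS Fq P ξ = 0}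

/-- The height of an algebraic Laurent series: the least height of a nonzero annihilating
polynomial of minimal degree (this is the height of the primitive minimal polynomial). -/
def heightLS (ξ : LaurentSeries Fq) : ℝ :=
  sInf {x | ∃ P : Polynomial (Polynomial Fq),
    P ≠ 0 ∧ P.natDegree = degLS Fq ξ ∧ evalLS Fq P ξ = 0 ∧ x = Hpoly Fq P}

/-- The Diophantine exponent `w_n(ξ)`. -/
def wExp (n : ℕ) (ξ : LaurentSeries Fq) : EReal :=
  sSup ((fun w : ℝ => (w : EReal)) ''
    {w | {P : Polynomial (Polynomial Fq) | P.natDegree ≤ n ∧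
      0 < absQ Fq (evalLS Fq P ξ) ∧
      absQ Fq (evalLS Fq P ξ) ≤ Hpoly Fq P ^ (-w)}.Infinite})

variable (L : Type) [Field L] [Algebra (LaurentSeries Fq) L]

/-- The embedding of `F_q[T]` into a field extension `L` of `F_q((T⁻¹))`. -/
def embRing : Polynomial Fq →+* L :=
  (algebraMap (LaurentSeries Fq) L).comp (toLS Fq)

/-- Evaluation of `P(X) ∈ (F_q[T])[X]` at `α ∈ L`. -/
def evalA (P : Polynomial (Polynomial Fq)) (α : L) : L :=
  Polynomial.eval₂ (embRing Fq L) α P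

/-- The degree of an algebraic `α ∈ L` over `F_q(T)`. -/
def degA (α : L) : ℕ :=
  sInf {d | ∃ P : Polynomial (Polynomial Fq), P ≠ 0 ∧ P.natDegree = d ∧ evalA Fq L P α = 0}

/-- The height of an algebraic `α ∈ L`: the height of its primitive minimal polynomial
over `F_q[T]`. -/
def heightA (α : L) : ℝ :=
  sInf {x | ∃ P : Polynomial (Polynomial Fq),
    P ≠ 0 ∧ P.natDegree = degA Fq L α ∧ evalA Fq L P α = 0 ∧ x = Hpoly Fq P}

/-- `α ∈ L` is algebraic of degree at most `n` over `F_q(T)`. -/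
def IsAlgDeg (n : ℕ) (α : L) : Prop :=
  ∃ P : Polynomial (Polynomial Fq), P ≠ 0 ∧ P.natDegree ≤ n ∧ evalA Fq L P α = 0

/-- The Diophantine exponent `w_n^*(ξ)`, computed with respect to an extension `L` of
`F_q((T⁻¹))` (to be taken algebraically closed) endowed with an absolute value `v`
extending `absQ`. -/
def wstarExp (n : ℕ) (ξ : LaurentSeries Fq) (v : AbsoluteValue L ℝ) : EReal :=
  sSup ((fun w : ℝ => (w : EReal)) ''
    {w | {α : L | IsAlgDeg Fq L n α ∧
      0 < v (algebraMap (LaurentSeries Fq) L ξ - α) ∧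
      v (algebraMap (LaurentSeries Fq) L ξ - α) ≤ heightA Fq L α ^ (-w - 1)}.Infinite})

end CFq

end
section Helpers

set_option linter.unusedSectionVars false

namespace CFqAux

open CFq

variable {Fq : Type} [Field Fq] [Fintype Fq]

lemma one_lt_q : (1:ℝ) < (Fintype.card Fq : ℝ) := by
  exact_mod_cast Fintype.one_lt_card

lemma q_pos : (0:ℝ) < (Fintype.card Fq : ℝ) :=
  lt_trans one_pos (one_lt_q (Fq := Fq))

lemma absQ_zero : absQ Fq 0 = 0 := if_pos rfl

lemma absQ_of_ne {x : LaurentSeries Fq} (hx : x ≠ 0) :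
    absQ Fq x = (Fintype.card Fq : ℝ) ^ (-x.order) := if_neg hx

lemma absQ_pos {x : LaurentSeries Fq} (hx : x ≠ 0) : 0 < absQ Fq x := by
  rw [absQ_of_ne hx]; exact zpow_pos q_pos _

lemma absQ_nonneg (x : LaurentSeries Fq) : 0 ≤ absQ Fq x := by
  by_cases hx : x = 0
  · simp [hx, absQ_zero]
  · exact (absQ_pos hx).le

lemma absQ_lt_iff {x y : LaurentSeries Fq} (hx : x ≠ 0) (hy : y ≠ 0) :
    absQ Fq x < absQ Fq y ↔ y.order < x.order := by
  rw [absQ_of_ne hx, absQ_of_ne hy, zpow_lt_zpow_iff_right₀ one_lt_q, neg_lt_neg_iff]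

lemma absQ_mul (x y : LaurentSeries Fq) : absQ Fq (x * y) = absQ Fq x * absQ Fq y := by
  by_cases hx : x = 0; · simp [hx, absQ_zero]
  by_cases hy : y = 0; · simp [hy, absQ_zero]
  have hxy : x * y ≠ 0 := mul_ne_zero hx hy
  rw [absQ_of_ne hx, absQ_of_ne hy, absQ_of_ne hxy, HahnSeries.order_mul hx hy, neg_add,
    zpow_add₀ (ne_of_gt q_pos)]

lemma absQ_one : absQ Fq 1 = 1 := by
  rw [absQ_of_ne one_ne_zero, HahnSeries.order_one]; simp

lemma absQ_neg (x : LaurentSeries Fq) : absQ Fq (-x) = absQ Fq x := by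
  by_cases hx : x = 0; · simp [hx]
  rw [absQ_of_ne (neg_ne_zero.mpr hx), absQ_of_ne hx, HahnSeries.order_neg]

lemma absQ_inv (x : LaurentSeries Fq) : absQ Fq x⁻¹ = (absQ Fq x)⁻¹ := by
  by_cases hx : x = 0; · simp [hx, absQ_zero]
  have h2 : absQ Fq x⁻¹ * absQ Fq x = 1 := by
    rw [← absQ_mul, inv_mul_cancel₀ hx, absQ_one]
  exact eq_inv_of_mul_eq_one_left h2

lemma order_add_of_lt {x y : LaurentSeries Fq} (hx : x ≠ 0)
    (h : y = 0 ∨ x.order < y.order) : x + y ≠ 0 ∧ (x + y).order = x.order := by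
  rcases h with h | h
  · simp [h, hx]
  have hc : (x + y).coeff x.order ≠ 0 := by
    rw [HahnSeries.coeff_add, HahnSeries.coeff_eq_zero_of_lt_order h, add_zero]
    exact HahnSeries.coeff_order_eq_zero.not.2 hx
  have hne : x + y ≠ 0 := fun h0 => by simp [h0] at hc
  refine ⟨hne, le_antisymm (HahnSeries.order_le_of_coeff_ne_zero hc) ?_⟩
  by_contra hlt
  push_neg at hlt
  apply HahnSeries.coeff_order_eq_zero.not.2 hne
  rw [HahnSeries.coeff_add, HahnSeries.coeff_eq_zero_of_lt_order hlt,
    HahnSeries.coeff_eq_zero_of_lt_order (lt_trans hlt h), add_zero]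

lemma absQ_add_left {x y : LaurentSeries Fq} (hx : x ≠ 0) (h : absQ Fq y < absQ Fq x) :
    absQ Fq (x + y) = absQ Fq x := by
  have h' : y = 0 ∨ x.order < y.order := by
    by_cases hy : y = 0
    · exact Or.inl hy
    · exact Or.inr ((absQ_lt_iff hy hx).mp h)
  obtain ⟨hne, hord⟩ := order_add_of_lt hx h'
  rw [absQ_of_ne hne, absQ_of_ne hx, hord]

lemma absQ_add_le (x y : LaurentSeries Fq) :
    absQ Fq (x + y) ≤ max (absQ Fq x) (absQ Fq y) := by
  by_cases hxy : x + y = 0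
  · rw [hxy, absQ_zero]; exact le_max_of_le_left (absQ_nonneg x)
  by_cases hx : x = 0; · simp [hx]
  by_cases hy : y = 0; · simp [hy]
  have hmin := HahnSeries.min_order_le_order_add hxy
  rw [absQ_of_ne hxy, absQ_of_ne hx, absQ_of_ne hy]
  rcases le_total x.order y.order with hle | hle
  · apply le_max_of_le_left
    apply zpow_le_zpow_right₀ one_lt_q.le
    rw [min_eq_left hle] at hmin
    exact neg_le_neg hmin
  · apply le_max_of_le_right
    apply zpow_le_zpow_right₀ one_lt_q.le
    rw [min_eq_right hle] at hmin
    exact neg_le_neg hmin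

lemma toLS_C (c : Fq) : toLS Fq (Polynomial.C c) = HahnSeries.single 0 c := by
  show Polynomial.aeval (Tls Fq) (Polynomial.C c) = _
  rw [Polynomial.aeval_C]
  have : algebraMap Fq (LaurentSeries Fq) c
      = HahnSeries.ofPowerSeries ℤ Fq (PowerSeries.C c) := rfl
  rw [this, HahnSeries.ofPowerSeries_C]
  ext g
  simp [HahnSeries.C_apply, PowerSeries.coeff_C]

lemma toLS_X_pow (n : ℕ) : toLS Fq (Polynomial.X ^ n) = HahnSeries.single (-(n:ℤ)) 1 := by
  show Polynomial.aeval (Tls Fq) (Polynomial.X ^ n) = _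
  rw [map_pow, Polynomial.aeval_X]
  show (HahnSeries.single (-1 : ℤ) (1 : Fq)) ^ n = _
  rw [HahnSeries.single_pow, one_pow]
  congr 1
  simp

lemma toLS_order : ∀ (n : ℕ) (f : Polynomial Fq), f ≠ 0 → f.natDegree ≤ n →
    toLS Fq f ≠ 0 ∧ (toLS Fq f).order = -(f.natDegree : ℤ) := by
  intro n
  induction n with
  | zero =>
    intro f hf h0
    have hdeg : f.natDegree = 0 := le_antisymm h0 (Nat.zero_le _)
    have hc : f = Polynomial.C (f.coeff 0) := Polynomial.eq_C_of_natDegree_eq_zero hdeg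
    have hc0 : f.coeff 0 ≠ 0 := by
      intro h; apply hf; rw [hc, h, map_zero]
    constructor
    · rw [hc, toLS_C]; exact HahnSeries.single_ne_zero hc0
    · rw [hc, toLS_C, HahnSeries.order_single hc0, Polynomial.natDegree_C]; simp
  | succ n ih =>
    intro f hf hdeg
    by_cases hd : f.natDegree ≤ n
    · exact ih f hf hd
    have hlead : f.leadingCoeff ≠ 0 := Polynomial.leadingCoeff_ne_zero.mpr hf
    have hsplit := Polynomial.eraseLead_add_C_mul_X_pow f
    have hs : toLS Fq f
        = HahnSeries.single (-(f.natDegree : ℤ)) f.leadingCoeff + toLS Fq f.eraseLead := by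
      conv_lhs => rw [← hsplit]
      rw [map_add, map_mul, toLS_C, toLS_X_pow, add_comm]
      congr 1
      rw [HahnSeries.single_mul_single, zero_add, mul_one]
    have hx : (HahnSeries.single (-(f.natDegree : ℤ)) f.leadingCoeff : LaurentSeries Fq) ≠ 0 :=
      HahnSeries.single_ne_zero hlead
    have hglt : f.eraseLead.natDegree ≤ n := by
      have := Polynomial.eraseLead_natDegree_le f; omega
    have hy : toLS Fq f.eraseLead = 0 ∨
        (HahnSeries.single (-(f.natDegree : ℤ)) f.leadingCoeff : LaurentSeries Fq).order
          < (toLS Fq f.eraseLead).order := by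
      by_cases hg : f.eraseLead = 0
      · left; rw [hg, map_zero]
      · right
        rw [(ih f.eraseLead hg hglt).2, HahnSeries.order_single hlead]
        have : f.eraseLead.natDegree < f.natDegree := by omega
        omega
    obtain ⟨hne, hord⟩ := order_add_of_lt hx hy
    rw [hs]
    exact ⟨hne, by rw [hord, HahnSeries.order_single hlead]⟩

lemma toLS_ne {f : Polynomial Fq} (hf : f ≠ 0) : toLS Fq f ≠ 0 :=
  (toLS_order f.natDegree f hf le_rfl).1

lemma pabs_of_ne {f : Polynomial Fq} (hf : f ≠ 0) :
    pabs Fq f = (Fintype.card Fq : ℝ) ^ (f.natDegree : ℤ) := by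
  unfold CFq.pabs
  rw [absQ_of_ne (toLS_ne hf), (toLS_order f.natDegree f hf le_rfl).2, neg_neg]

lemma pabs_pos {f : Polynomial Fq} (hf : f ≠ 0) : 0 < pabs Fq f :=
  absQ_pos (toLS_ne hf)

lemma one_le_pabs {f : Polynomial Fq} (hf : f ≠ 0) : 1 ≤ pabs Fq f := by
  rw [pabs_of_ne hf]
  calc (1:ℝ) = (Fintype.card Fq : ℝ) ^ (0:ℤ) := by simp
  _ ≤ _ := zpow_le_zpow_right₀ one_lt_q.le (by positivity)

lemma one_lt_pabs {f : Polynomial Fq} (hf : 1 ≤ f.natDegree) : 1 < pabs Fq f := by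
  have hne : f ≠ 0 := fun h => by simp [h] at hf
  rw [pabs_of_ne hne]
  calc (1:ℝ) = (Fintype.card Fq : ℝ) ^ (0:ℤ) := by simp
  _ < _ := by
    apply zpow_lt_zpow_right₀ one_lt_q
    exact_mod_cast hf

lemma pabs_lt_pabs {f g : Polynomial Fq} (hf : f ≠ 0) (hg : g ≠ 0)
    (h : f.natDegree < g.natDegree) : pabs Fq f < pabs Fq g := by
  rw [pabs_of_ne hf, pabs_of_ne hg]
  apply zpow_lt_zpow_right₀ one_lt_q
  exact_mod_cast h

/-- Numerators `p_{n-1}` (shifted index). -/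
noncomputable def cfP (a : ℕ → Polynomial Fq) : ℕ → Polynomial Fq
  | 0 => 1
  | 1 => a 0
  | n + 2 => a (n + 1) * cfP a (n + 1) + cfP a n

/-- Denominators `q_{n-1}` (shifted index). -/
noncomputable def cfQ (a : ℕ → Polynomial Fq) : ℕ → Polynomial Fq
  | 0 => 0
  | 1 => 1
  | n + 2 => a (n + 1) * cfQ a (n + 1) + cfQ a n

lemma cfP_zero (a : ℕ → Polynomial Fq) : cfP a 0 = 1 := by simp [cfP]
lemma cfP_one (a : ℕ → Polynomial Fq) : cfP a 1 = a 0 := by simp [cfP]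
lemma cfP_succ2 (a : ℕ → Polynomial Fq) (n : ℕ) :
    cfP a (n + 2) = a (n + 1) * cfP a (n + 1) + cfP a n := by simp [cfP]
lemma cfQ_zero (a : ℕ → Polynomial Fq) : cfQ a 0 = 0 := by simp [cfQ]
lemma cfQ_one (a : ℕ → Polynomial Fq) : cfQ a 1 = 1 := by simp [cfQ]
lemma cfQ_succ2 (a : ℕ → Polynomial Fq) (n : ℕ) :
    cfQ a (n + 2) = a (n + 1) * cfQ a (n + 1) + cfQ a n := by simp [cfQ]
lemma qden_zero (a : ℕ → Polynomial Fq) : CFq.qden Fq a 0 = 1 := by simp [CFq.qden]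
lemma qden_one (a : ℕ → Polynomial Fq) : CFq.qden Fq a 1 = a 1 := by simp [CFq.qden]
lemma qden_succ2 (a : ℕ → Polynomial Fq) (n : ℕ) :
    CFq.qden Fq a (n + 2) = a (n + 2) * CFq.qden Fq a (n + 1) + CFq.qden Fq a n := by
  simp [CFq.qden]

lemma cfQ_eq_qden (a : ℕ → Polynomial Fq) : ∀ n, cfQ a (n + 1) = CFq.qden Fq a n := by
  intro n
  induction n using Nat.strong_induction_on with
  | _ n ih =>
    match n with
    | 0 => rw [cfQ_one, qden_zero]
    | 1 => rw [show (1:ℕ) + 1 = 0 + 2 from rfl, cfQ_succ2, cfQ_one, cfQ_zero, qden_one]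
           ring
    | (n+2) =>
      show cfQ a (n + 3) = CFq.qden Fq a (n + 2)
      rw [show n + 3 = (n + 1) + 2 from rfl, cfQ_succ2, qden_succ2,
        ih (n+1) (by omega), ih n (by omega)]

lemma cf_det (a : ℕ → Polynomial Fq) :
    ∀ n, cfP a (n + 1) * cfQ a n - cfP a n * cfQ a (n + 1) = (-1) ^ (n + 1) := by
  intro n
  induction n with
  | zero => rw [cfP_one, cfQ_zero, cfP_zero, cfQ_one]; ring
  | succ n ih =>
    show cfP a (n + 2) * cfQ a (n + 1) - cfP a (n + 1) * cfQ a (n + 2) = (-1) ^ (n + 2)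
    rw [cfP_succ2, cfQ_succ2, show ((-1 : Polynomial Fq)) ^ (n + 2) = (-1) ^ (n+1) * (-1) by ring]
    linear_combination (-1 : Polynomial Fq) * ih

lemma cf_congr (a b : ℕ → Polynomial Fq) (k : ℕ) (h : ∀ n, n ≤ k → a n = b n) :
    ∀ n, n ≤ k + 1 → cfP a n = cfP b n ∧ cfQ a n = cfQ b n := by
  intro n
  induction n using Nat.strong_induction_on with
  | _ n ih =>
    match n with
    | 0 => intro _; rw [cfP_zero, cfP_zero, cfQ_zero, cfQ_zero]; exact ⟨rfl, rfl⟩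
    | 1 => intro hn; rw [cfP_one, cfP_one, cfQ_one, cfQ_one]
           exact ⟨h 0 (by omega), rfl⟩
    | (n+2) =>
      intro hn
      obtain ⟨hp1, hq1⟩ := ih (n+1) (by omega) (by omega)
      obtain ⟨hp0, hq0⟩ := ih n (by omega) (by omega)
      have hs := h (n+1) (by omega)
      rw [cfP_succ2, cfP_succ2, cfQ_succ2, cfQ_succ2, hp1, hp0, hq1, hq0, hs]
      exact ⟨rfl, rfl⟩

lemma qden_spec (a : ℕ → Polynomial Fq) (ha : ∀ n, 1 ≤ n → 1 ≤ (a n).natDegree) :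
    ∀ n, CFq.qden Fq a n ≠ 0 ∧ CFq.qden Fq a (n + 1) ≠ 0 ∧
      (CFq.qden Fq a n).natDegree < (CFq.qden Fq a (n + 1)).natDegree := by
  intro n
  induction n with
  | zero =>
    have h1 : 1 ≤ (a 1).natDegree := ha 1 le_rfl
    have ha1 : a 1 ≠ 0 := fun h => by simp [h] at h1
    rw [qden_zero, qden_one]
    refine ⟨one_ne_zero, ha1, ?_⟩
    rw [Polynomial.natDegree_one]; omega
  | succ n ih =>
    obtain ⟨h0, h1, hlt⟩ := ih
    have hd2 : 1 ≤ (a (n+2)).natDegree := ha _ (by omega)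
    have ha2 : a (n+2) ≠ 0 := fun h => by simp [h] at hd2
    have hmul : (a (n+2) * CFq.qden Fq a (n+1)).natDegree
        = (a (n+2)).natDegree + (CFq.qden Fq a (n+1)).natDegree :=
      Polynomial.natDegree_mul ha2 h1
    have hlt2 : (CFq.qden Fq a n).natDegree < (a (n+2) * CFq.qden Fq a (n+1)).natDegree := by
      omega
    have heq : (CFq.qden Fq a (n+2)).natDegree = (a (n+2) * CFq.qden Fq a (n+1)).natDegree := by
      rw [qden_succ2]
      exact Polynomial.natDegree_add_eq_left_of_natDegree_lt hlt2
    have hne : CFq.qden Fq a (n+2) ≠ 0 := by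
      intro h
      rw [h, Polynomial.natDegree_zero] at heq
      omega
    refine ⟨h1, ?_, ?_⟩
    · show CFq.qden Fq a (n + 2) ≠ 0; exact hne
    · show (CFq.qden Fq a (n+1)).natDegree < (CFq.qden Fq a (n+2)).natDegree
      omega

lemma cf_rel {ξ : LaurentSeries Fq} {a : ℕ → Polynomial Fq} (t : ℕ → LaurentSeries Fq)
    (ht0 : t 0 = ξ) (hrec : ∀ n, t n = toLS Fq (a n) + (t (n + 1))⁻¹)
    (htne : ∀ n, t (n + 1) ≠ 0) :
    ∀ n, ξ * (toLS Fq (cfQ a (n + 1)) * t (n + 1) + toLS Fq (cfQ a n)) =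
      toLS Fq (cfP a (n + 1)) * t (n + 1) + toLS Fq (cfP a n) := by
  intro n
  induction n with
  | zero =>
    have h0 := hrec 0
    rw [ht0] at h0
    have h1 : (t 1)⁻¹ * t 1 = 1 := inv_mul_cancel₀ (htne 0)
    rw [cfQ_one, cfQ_zero, cfP_one, cfP_zero, map_one, map_zero]
    linear_combination t 1 * h0 + h1
  | succ n ih =>
    have h0 := hrec (n+1)
    have h1 : (t (n+2))⁻¹ * t (n+2) = 1 := inv_mul_cancel₀ (htne (n+1))
    show ξ * (toLS Fq (cfQ a (n + 2)) * t (n + 2) + toLS Fq (cfQ a (n + 1)))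
        = toLS Fq (cfP a (n + 2)) * t (n + 2) + toLS Fq (cfP a (n + 1))
    rw [cfQ_succ2, cfP_succ2, map_add, map_add, map_mul, map_mul]
    linear_combination t (n+2) * ih
      - (ξ * toLS Fq (cfQ a (n+1)) - toLS Fq (cfP a (n+1))) * (t (n+2) * h0 + h1)

lemma abs_t {a : ℕ → Polynomial Fq} {t : ℕ → LaurentSeries Fq} {n : ℕ}
    (hdeg : 1 ≤ (a n).natDegree) (hrec : t n = toLS Fq (a n) + (t (n + 1))⁻¹)
    (hbig : 1 < absQ Fq (t (n + 1))) :
    absQ Fq (t n) = pabs Fq (a n) := by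
  have han : a n ≠ 0 := fun h => by simp [h] at hdeg
  rw [hrec]
  rw [show pabs Fq (a n) = absQ Fq (toLS Fq (a n)) from rfl]
  apply absQ_add_left (toLS_ne han)
  rw [absQ_inv]
  have h1 : (absQ Fq (t (n+1)))⁻¹ < 1 := inv_lt_one_of_one_lt₀ hbig
  have h2 : (1:ℝ) < pabs Fq (a n) := one_lt_pabs hdeg
  have h3 : pabs Fq (a n) = absQ Fq (toLS Fq (a n)) := rfl
  rw [← h3]
  linarith

end CFqAux

end Helpers

/-- difference of two continued fractions agreeing up to index `k`. -/
theorem stmt0 (Fq : Type) [Field Fq] [Fintype Fq]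
    (ξ ζ : LaurentSeries Fq) (a b : ℕ → Polynomial Fq)
    (hξ : CFq.IsCF Fq ξ a) (hζ : CFq.IsCF Fq ζ b)
    (ha0 : a 0 = 0) (hb0 : b 0 = 0)
    (k : ℕ) (hk : 1 ≤ k)
    (hab : ∀ n, 1 ≤ n → n ≤ k → a n = b n)
    (hne : a (k + 1) ≠ b (k + 1)) :
    CFq.absQ Fq (ξ - ζ) =
      CFq.pabs Fq (a (k + 1) - b (k + 1)) /
        (CFq.pabs Fq (a (k + 1)) * CFq.pabs Fq (b (k + 1)) *
          CFq.pabs Fq (CFq.qden Fq a k) ^ 2) := by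
  classical
  obtain ⟨hadeg, t, ht0, htrec, htabs⟩ := hξ
  obtain ⟨hbdeg, s, hs0, hsrec, hsabs⟩ := hζ
  have htne : ∀ n, t (n + 1) ≠ 0 := fun n h => by
    have := htabs (n + 1) (by omega)
    rw [h, CFqAux.absQ_zero] at this; linarith
  have hsne : ∀ n, s (n + 1) ≠ 0 := fun n h => by
    have := hsabs (n + 1) (by omega)
    rw [h, CFqAux.absQ_zero] at this; linarith
  have hrel1 := CFqAux.cf_rel t ht0 htrec htne k
  have hrel2 := CFqAux.cf_rel s hs0 hsrec hsne k
  have hcong := CFqAux.cf_congr b a k (fun n hn => by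
    rcases Nat.eq_zero_or_pos n with h | h
    · rw [h, ha0, hb0]
    · exact (hab n h hn).symm)
  obtain ⟨hPk1, hQk1⟩ := hcong (k + 1) le_rfl
  obtain ⟨hPk, hQk⟩ := hcong k (by omega)
  rw [hPk1, hQk1, hPk, hQk] at hrel2
  set u := t (k + 1) with hu
  set v := s (k + 1) with hv
  set Q1 := CFq.toLS Fq (CFqAux.cfQ a (k + 1)) with hQ1def
  set Q0 := CFq.toLS Fq (CFqAux.cfQ a k) with hQ0def
  set P1 := CFq.toLS Fq (CFqAux.cfP a (k + 1)) with hP1def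
  set P0 := CFq.toLS Fq (CFqAux.cfP a k) with hP0def
  have hdet : P1 * Q0 - P0 * Q1 = ((-1 : LaurentSeries Fq)) ^ (k + 1) := by
    have h := congrArg (CFq.toLS Fq) (CFqAux.cf_det a k)
    rw [map_sub, map_mul, map_mul, map_pow, map_neg, map_one] at h
    exact h
  have hmain : (ξ - ζ) * ((Q1 * u + Q0) * (Q1 * v + Q0))
      = (-1 : LaurentSeries Fq) ^ (k + 1) * (u - v) := by
    linear_combination (Q1 * v + Q0) * hrel1 - (Q1 * u + Q0) * hrel2 + (u - v) * hdet
  -- absolute values of complete quotients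
  have habs_u : CFq.absQ Fq u = CFq.pabs Fq (a (k + 1)) :=
    CFqAux.abs_t (hadeg (k + 1) (by omega)) (htrec (k + 1)) (htabs (k + 2) (by omega))
  have habs_v : CFq.absQ Fq v = CFq.pabs Fq (b (k + 1)) :=
    CFqAux.abs_t (hbdeg (k + 1) (by omega)) (hsrec (k + 1)) (hsabs (k + 2) (by omega))
  -- degrees facts
  obtain ⟨m, rfl⟩ : ∃ m, k = m + 1 := ⟨k - 1, by omega⟩
  obtain ⟨hqm_ne, hqk_ne, hq_lt⟩ := CFqAux.qden_spec a hadeg m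
  have hQ1q : CFqAux.cfQ a (m + 1 + 1) = CFq.qden Fq a (m + 1) := CFqAux.cfQ_eq_qden a (m + 1)
  have hQ0q : CFqAux.cfQ a (m + 1) = CFq.qden Fq a m := CFqAux.cfQ_eq_qden a m
  have hQ1ne : Q1 ≠ 0 := by rw [hQ1def, hQ1q]; exact CFqAux.toLS_ne hqk_ne
  have habsQ1 : CFq.absQ Fq Q1 = CFq.pabs Fq (CFq.qden Fq a (m + 1)) := by
    rw [hQ1def, hQ1q]; rfl
  have habsQ0 : CFq.absQ Fq Q0 = CFq.pabs Fq (CFq.qden Fq a m) := by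
    rw [hQ0def, hQ0q]; rfl
  have hane : a (m + 1 + 1) ≠ 0 := fun h => by
    have := hadeg (m + 1 + 1) (by omega); simp [h] at this
  have hbne : b (m + 1 + 1) ≠ 0 := fun h => by
    have := hbdeg (m + 1 + 1) (by omega); simp [h] at this
  have hone_lt_pa : (1:ℝ) < CFq.pabs Fq (a (m + 1 + 1)) :=
    CFqAux.one_lt_pabs (hadeg (m + 1 + 1) (by omega))
  have hone_lt_pb : (1:ℝ) < CFq.pabs Fq (b (m + 1 + 1)) :=
    CFqAux.one_lt_pabs (hbdeg (m + 1 + 1) (by omega))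
  have hpq_pos : (0:ℝ) < CFq.pabs Fq (CFq.qden Fq a (m + 1)) := CFqAux.pabs_pos hqk_ne
  have hpm_lt : CFq.pabs Fq (CFq.qden Fq a m) < CFq.pabs Fq (CFq.qden Fq a (m + 1)) :=
    CFqAux.pabs_lt_pabs hqm_ne hqk_ne hq_lt
  -- |D1| and |D2|
  have hune : u ≠ 0 := htne (m + 1)
  have hvne : v ≠ 0 := hsne (m + 1)
  have habsD1 : CFq.absQ Fq (Q1 * u + Q0)
      = CFq.pabs Fq (CFq.qden Fq a (m + 1)) * CFq.pabs Fq (a (m + 1 + 1)) := by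
    have hprod : CFq.absQ Fq (Q1 * u)
        = CFq.pabs Fq (CFq.qden Fq a (m + 1)) * CFq.pabs Fq (a (m + 1 + 1)) := by
      rw [CFqAux.absQ_mul, habsQ1, habs_u]
    rw [← hprod]
    apply CFqAux.absQ_add_left (mul_ne_zero hQ1ne hune)
    rw [hprod, habsQ0]
    calc CFq.pabs Fq (CFq.qden Fq a m) < CFq.pabs Fq (CFq.qden Fq a (m + 1)) := hpm_lt
    _ = CFq.pabs Fq (CFq.qden Fq a (m + 1)) * 1 := (mul_one _).symm
    _ ≤ _ := by
      apply mul_le_mul_of_nonneg_left hone_lt_pa.le hpq_pos.le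
  have habsD2 : CFq.absQ Fq (Q1 * v + Q0)
      = CFq.pabs Fq (CFq.qden Fq a (m + 1)) * CFq.pabs Fq (b (m + 1 + 1)) := by
    have hprod : CFq.absQ Fq (Q1 * v)
        = CFq.pabs Fq (CFq.qden Fq a (m + 1)) * CFq.pabs Fq (b (m + 1 + 1)) := by
      rw [CFqAux.absQ_mul, habsQ1, habs_v]
    rw [← hprod]
    apply CFqAux.absQ_add_left (mul_ne_zero hQ1ne hvne)
    rw [hprod, habsQ0]
    calc CFq.pabs Fq (CFq.qden Fq a m) < CFq.pabs Fq (CFq.qden Fq a (m + 1)) := hpm_lt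
    _ = CFq.pabs Fq (CFq.qden Fq a (m + 1)) * 1 := (mul_one _).symm
    _ ≤ _ := by
      apply mul_le_mul_of_nonneg_left hone_lt_pb.le hpq_pos.le
  -- |u - v|
  have hdiffne : a (m + 1 + 1) - b (m + 1 + 1) ≠ 0 := sub_ne_zero.mpr hne
  have habs_uv : CFq.absQ Fq (u - v) = CFq.pabs Fq (a (m + 1 + 1) - b (m + 1 + 1)) := by
    have hform : u - v = CFq.toLS Fq (a (m + 1 + 1) - b (m + 1 + 1))
        + ((t (m + 1 + 2))⁻¹ - (s (m + 1 + 2))⁻¹) := by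
      rw [map_sub]
      have h1 := htrec (m + 1 + 1)
      have h2 := hsrec (m + 1 + 1)
      rw [hu, hv]
      linear_combination h1 - h2
    rw [hform]
    rw [show CFq.pabs Fq (a (m + 1 + 1) - b (m + 1 + 1))
      = CFq.absQ Fq (CFq.toLS Fq (a (m + 1 + 1) - b (m + 1 + 1))) from rfl]
    apply CFqAux.absQ_add_left (CFqAux.toLS_ne hdiffne)
    have hle1 : CFq.absQ Fq ((t (m + 1 + 2))⁻¹) < 1 := by
      rw [CFqAux.absQ_inv]
      exact inv_lt_one_of_one_lt₀ (htabs (m + 1 + 2) (by omega))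
    have hle2 : CFq.absQ Fq ((s (m + 1 + 2))⁻¹) < 1 := by
      rw [CFqAux.absQ_inv]
      exact inv_lt_one_of_one_lt₀ (hsabs (m + 1 + 2) (by omega))
    have hmax : CFq.absQ Fq ((t (m + 1 + 2))⁻¹ - (s (m + 1 + 2))⁻¹) < 1 := by
      rw [sub_eq_add_neg]
      calc CFq.absQ Fq ((t (m + 1 + 2))⁻¹ + -(s (m + 1 + 2))⁻¹)
          ≤ max (CFq.absQ Fq ((t (m + 1 + 2))⁻¹)) (CFq.absQ Fq (-(s (m + 1 + 2))⁻¹)) :=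
            CFqAux.absQ_add_le _ _
      _ < 1 := by rw [CFqAux.absQ_neg]; exact max_lt hle1 hle2
    have hge : (1:ℝ) ≤ CFq.absQ Fq (CFq.toLS Fq (a (m + 1 + 1) - b (m + 1 + 1))) :=
      CFqAux.one_le_pabs hdiffne
    linarith
  -- put everything together
  have hfinal := congrArg (CFq.absQ Fq) hmain
  rw [CFqAux.absQ_mul, CFqAux.absQ_mul, CFqAux.absQ_mul, habsD1, habsD2, habs_uv] at hfinal
  have hsign : CFq.absQ Fq ((-1 : LaurentSeries Fq) ^ (m + 1 + 1)) = 1 := by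
    have h1 : ((-1 : LaurentSeries Fq) ^ (m + 1 + 1)) * ((-1 : LaurentSeries Fq) ^ (m + 1 + 1))
        = 1 := by rw [← mul_pow]; norm_num
    have h2 := congrArg (CFq.absQ Fq) h1
    rw [CFqAux.absQ_mul, CFqAux.absQ_one] at h2
    nlinarith [CFqAux.absQ_nonneg ((-1 : LaurentSeries Fq) ^ (m + 1 + 1))]
  rw [hsign, one_mul] at hfinal
  have hden_ne : CFq.pabs Fq (a (m + 1 + 1)) * CFq.pabs Fq (b (m + 1 + 1)) *
      CFq.pabs Fq (CFq.qden Fq a (m + 1)) ^ 2 ≠ 0 := by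
    positivity
  rw [eq_div_iff hden_ne]
  linear_combination hfinal
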